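/- arXiv:1408.1658 — 3 statements merged into one kernel-verified Lean document; each statement's English description precedes it below -/
import Mathlib

section
/- If F is a long-tailed distribution on ℝ, then for any Δ > 1 and δ > 0 there exists X = X(Δ, δ) such that for all x, y ≥ X, F̄(x)/F̄(y) ≤ Δ · exp(δ·|x − y|). -/
open MeasureTheory ProbabilityTheory Filter Real Set

/-- Tail function of a distribution on ℝ. -/
noncomputable def tailFun (ν : MeasureTheory.Measure ℝ) (x : ℝ) : ℝ := (ν (Set.Ioi x)).toReal

/-- A distribution on ℝ is long-tailed. -/
def IsLongTailed (ν : MeasureTheory.Measure ℝ) : Prop :=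
  (∀ x : ℝ, 0 < tailFun ν x) ∧
    ∀ y : ℝ, Filter.Tendsto (fun x => tailFun ν (x + y) / tailFun ν x) Filter.atTop (nhds 1)

/-- Convolution of two measures on ℝ. -/
noncomputable def convMeas (μ ν : MeasureTheory.Measure ℝ) : MeasureTheory.Measure ℝ :=
  (μ.prod ν).map (fun p => p.1 + p.2)

/-- A distribution on ℝ is subexponential. -/
def IsSubexponential (ν : MeasureTheory.Measure ℝ) : Prop :=
  IsLongTailed ν ∧
    Filter.Tendsto (fun x => tailFun (convMeas ν ν) x / tailFun ν x) Filter.atTop (nhds 2)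

/-- Potter-type bounds for long-tailed distributions. -/
theorem longTailed_potter_bounds (ν : Measure ℝ) [IsProbabilityMeasure ν]
    (hL : IsLongTailed ν) :
    ∀ Δ : ℝ, 1 < Δ → ∀ δ : ℝ, 0 < δ → ∃ X : ℝ, ∀ x y : ℝ, X ≤ x → X ≤ y →
      tailFun ν x / tailFun ν y ≤ Δ * Real.exp (δ * |x - y|) := by
  intro Δ hΔ δ hδ
  have hmono : ∀ a b : ℝ, a ≤ b → tailFun ν b ≤ tailFun ν a := by
    intro a b hab
    exact ENNReal.toReal_mono (measure_ne_top ν _) (measure_mono (Set.Ioi_subset_Ioi hab))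
  set C := min Δ (Real.exp δ) with hCdef
  have hC1 : 1 < C := lt_min hΔ (by have := Real.add_one_le_exp δ; nlinarith)
  have hC0 : 0 < C := lt_trans one_pos hC1
  have hCinv : C⁻¹ < 1 := inv_lt_one_of_one_lt₀ hC1
  obtain ⟨X, hX⟩ := Filter.eventually_atTop.mp
    ((hL.2 1).eventually (eventually_gt_nhds hCinv))
  have hstep : ∀ t : ℝ, X ≤ t → tailFun ν t ≤ C * tailFun ν (t + 1) := by
    intro t ht
    have h1 := hX t ht
    have hb := hL.1 t
    have h2 : C⁻¹ * tailFun ν t < tailFun ν (t + 1) := (lt_div_iff₀ hb).mp h1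
    have h3 := mul_lt_mul_of_pos_left h2 hC0
    rw [← mul_assoc, mul_inv_cancel₀ hC0.ne', one_mul] at h3
    exact h3.le
  have hiter : ∀ n : ℕ, ∀ t : ℝ, X ≤ t → tailFun ν t ≤ C ^ n * tailFun ν (t + n) := by
    intro n
    induction n with
    | zero => intro t ht; simp
    | succ n ih =>
      intro t ht
      have h1 := hstep t ht
      have h2 := ih (t + 1) (le_trans ht (by linarith))
      have h3 : t + 1 + (n : ℝ) = t + ((n : ℕ) + 1 : ℕ) := by push_cast; ring
      calc tailFun ν t ≤ C * tailFun ν (t + 1) := h1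
        _ ≤ C * (C ^ n * tailFun ν (t + 1 + n)) := mul_le_mul_of_nonneg_left h2 hC0.le
        _ = C ^ (n + 1) * tailFun ν (t + ((n : ℕ) + 1 : ℕ)) := by rw [h3]; ring
  refine ⟨X, fun x y hx hy => ?_⟩
  have hexp1 : 1 ≤ Real.exp (δ * |x - y|) := Real.one_le_exp (by positivity)
  rcases le_total y x with hxy | hxy
  · have h1 : tailFun ν x / tailFun ν y ≤ 1 := (div_le_one (hL.1 y)).mpr (hmono y x hxy)
    nlinarith
  · set n := ⌈y - x⌉₊ with hn
    have hyx : 0 ≤ y - x := by linarith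
    have hn1 : y - x ≤ (n : ℝ) := Nat.le_ceil _
    have hn2 : (n : ℝ) ≤ y - x + 1 := (Nat.ceil_lt_add_one hyx).le
    have h1 : tailFun ν x ≤ C ^ n * tailFun ν (x + n) := hiter n x hx
    have h3 : tailFun ν x ≤ C ^ n * tailFun ν y := by
      refine h1.trans (mul_le_mul_of_nonneg_left ?_ (by positivity))
      exact hmono y (x + n) (by linarith)
    have h4 : tailFun ν x / tailFun ν y ≤ C ^ n := (div_le_iff₀ (hL.1 y)).mpr h3
    have h5 : (C : ℝ) ^ n = C ^ (n : ℝ) := (Real.rpow_natCast C n).symm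
    have h6 : C ^ (n : ℝ) ≤ C ^ (y - x + 1) :=
      Real.rpow_le_rpow_of_exponent_le hC1.le hn2
    have h7 : C ^ (y - x + 1) = C ^ (y - x) * C := by
      rw [Real.rpow_add hC0, Real.rpow_one]
    have h8 : C ^ (y - x) ≤ (Real.exp δ) ^ (y - x) :=
      Real.rpow_le_rpow hC0.le (min_le_right _ _) hyx
    have h9 : (Real.exp δ) ^ (y - x) = Real.exp (δ * (y - x)) := by
      rw [Real.rpow_def_of_pos (Real.exp_pos δ), Real.log_exp]
    have habs : |x - y| = y - x := by rw [abs_sub_comm]; exact abs_of_nonneg hyx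
    calc tailFun ν x / tailFun ν y ≤ (C : ℝ) ^ n := h4
      _ = C ^ (n : ℝ) := h5
      _ ≤ C ^ (y - x) * C := by rw [← h7]; exact h6
      _ ≤ Real.exp (δ * (y - x)) * Δ :=
          mul_le_mul (h8.trans_eq h9) (min_le_left _ _) hC0.le (Real.exp_pos _).le
      _ = Δ * Real.exp (δ * |x - y|) := by rw [habs]; ring
end

section
/- Let {B_j}_{j≥1} be i.i.d. real random variables with E[log⁺|B₁|] < ∞, and fix δ > 0, K > 0 with P[log|B₁| > K] < 1/2. Then for every n ≥ 1, log P[|B_j| ≤ e^{δj+K} for all j ≤ n] ≥ −2·δ^{-1}·E[(log|B₁| − K)₊]; in particular P[|B_j| ≤ e^{δj+K} for all j ≥ 1] → 1 as K → ∞. -/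
open MeasureTheory ProbabilityTheory Filter Real Set

/-!
By independence, the probability that the first `n` barriers hold is `∏_{j ≤ n} (1 - p_j)` with
`p_j = P[|B₁| > e^{δj+K}] ≤ P[(log|B₁| - K)₊ ≥ δj]`, and counting the `j` with `δj ≤ x` gives
`∑_j p_j ≤ δ⁻¹ E[(log|B₁| - K)₊]`. When every `p_j ≤ 1/2`, `1 - p ≥ e^{-2p}` turns this into the
logarithmic bound. For the limit, `∏ (1 - p_j) ≥ 1 - ∑ p_j` needs no condition on `K`, and
`E[(log|B₁| - K)₊] → 0` by dominated convergence.
-/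

lemma Real.log_max_abs_one (x : ℝ) : log (max |x| 1) = max (log |x|) 0 := by
  rcases le_or_gt |x| 1 with h | h
  · rw [max_eq_right h, log_one, max_eq_right (log_nonpos (abs_nonneg x) h)]
  · rw [max_eq_left h.le, max_eq_left (log_pos h).le]

lemma Real.exp_neg_two_mul_le_one_sub {p : ℝ} (hp₀ : 0 ≤ p) (hp : p ≤ 1 / 2) :
    exp (-(2 * p)) ≤ 1 - p := by
  have hexp : 1 + 2 * p ≤ exp (2 * p) := by linarith [add_one_le_exp (2 * p)]
  rw [exp_neg, inv_le_iff_one_le_mul₀ (exp_pos _)]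
  nlinarith [mul_le_mul_of_nonneg_left hexp (by linarith : (0 : ℝ) ≤ 1 - p)]

lemma Finset.exp_neg_two_mul_sum_le_prod_one_sub {ι : Type*} (s : Finset ι) {p : ι → ℝ}
    (hp₀ : ∀ i ∈ s, 0 ≤ p i) (hp : ∀ i ∈ s, p i ≤ 1 / 2) :
    exp (-(2 * ∑ i ∈ s, p i)) ≤ ∏ i ∈ s, (1 - p i) := by
  rw [Finset.mul_sum, ← Finset.sum_neg_distrib, exp_sum]
  exact Finset.prod_le_prod (fun i _ => (exp_pos _).le)
    fun i hi => exp_neg_two_mul_le_one_sub (hp₀ i hi) (hp i hi)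

lemma Finset.one_sub_sum_le_prod_one_sub {ι : Type*} (s : Finset ι) {p : ι → ℝ}
    (hp₀ : ∀ i ∈ s, 0 ≤ p i) (hp₁ : ∀ i ∈ s, p i ≤ 1) :
    1 - ∑ i ∈ s, p i ≤ ∏ i ∈ s, (1 - p i) := by
  classical
  induction s using Finset.induction_on with
  | empty => simp
  | insert a s ha ih =>
    rw [Finset.sum_insert ha, Finset.prod_insert ha]
    have ih' := ih (fun i hi => hp₀ i (Finset.mem_insert_of_mem hi))
      (fun i hi => hp₁ i (Finset.mem_insert_of_mem hi))
    have hs₀ : 0 ≤ ∑ i ∈ s, p i :=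
      Finset.sum_nonneg fun i hi => hp₀ i (Finset.mem_insert_of_mem hi)
    have ha₀ := hp₀ a (Finset.mem_insert_self a s)
    have ha₁ := hp₁ a (Finset.mem_insert_self a s)
    nlinarith [mul_le_mul_of_nonneg_left ih' (sub_nonneg.2 ha₁)]

lemma card_filter_mul_le_le_div {δ x : ℝ} (hδ : 0 < δ) (hx : 0 ≤ x) (n : ℕ) :
    (((Finset.Icc 1 n).filter fun j : ℕ => δ * j ≤ x).card : ℝ) ≤ x / δ := by
  have hsub : (Finset.Icc 1 n).filter (fun j : ℕ => δ * j ≤ x) ⊆ Finset.Icc 1 ⌊x / δ⌋₊ := by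
    intro j hj
    simp only [Finset.mem_filter, Finset.mem_Icc] at hj ⊢
    exact ⟨hj.1.1, Nat.le_floor ((le_div_iff₀ hδ).2 (by linarith [hj.2]))⟩
  calc _ ≤ ((Finset.Icc 1 ⌊x / δ⌋₊).card : ℝ) := by exact_mod_cast Finset.card_le_card hsub
    _ = ⌊x / δ⌋₊ := by simp
    _ ≤ x / δ := Nat.floor_le (by positivity)

section Integral

variable {Ω : Type*} [MeasurableSpace Ω] {μ : Measure Ω}

lemma sum_measureReal_mul_le_le_integral_div [IsFiniteMeasure μ] {X : Ω → ℝ}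
    (hX : Integrable X μ) (hX₀ : 0 ≤ X) {δ : ℝ} (hδ : 0 < δ) (n : ℕ) :
    ∑ j ∈ Finset.Icc 1 n, μ.real {ω | δ * j ≤ X ω} ≤ (∫ ω, X ω ∂μ) / δ := by
  have hmeas : ∀ j : ℕ, NullMeasurableSet {ω | δ * j ≤ X ω} μ :=
    fun j => nullMeasurableSet_le aemeasurable_const hX.aemeasurable
  have hint : ∀ j : ℕ, Integrable ({ω | δ * j ≤ X ω}.indicator (1 : Ω → ℝ)) μ :=
    fun j => (integrable_const 1).indicator₀ (hmeas j)
  calc ∑ j ∈ Finset.Icc 1 n, μ.real {ω | δ * j ≤ X ω}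
      = ∫ ω, ∑ j ∈ Finset.Icc 1 n, {ω | δ * j ≤ X ω}.indicator 1 ω ∂μ := by
        rw [integral_finsetSum _ fun j _ => hint j]
        refine Finset.sum_congr rfl fun j _ => ?_
        simp [integral_indicator₀ (hmeas j)]
    _ ≤ ∫ ω, X ω / δ ∂μ := by
        refine integral_mono (integrable_finsetSum _ fun j _ => hint j) (hX.div_const δ)
          fun ω => ?_
        simpa [Set.indicator_apply, Finset.sum_boole] using
          card_filter_mul_le_le_div hδ (hX₀ ω) n
    _ = (∫ ω, X ω ∂μ) / δ := integral_div δ _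

lemma MeasureTheory.Integrable.max_sub_const_zero {f : Ω → ℝ} (hf : AEStronglyMeasurable f μ)
    (hf_pos : Integrable (fun ω => max (f ω) 0) μ) {K : ℝ} (hK : 0 ≤ K) :
    Integrable (fun ω => max (f ω - K) 0) μ :=
  hf_pos.mono' (by fun_prop) <| ae_of_all _ fun ω => by
    rw [norm_of_nonneg (le_max_right _ _)]
    exact max_le_max (by linarith) le_rfl

lemma integrable_max_log_abs_zero {Y : Ω → ℝ}
    (hint : Integrable (fun ω => log (max |Y ω| 1)) μ) :
    Integrable (fun ω => max (log |Y ω|) 0) μ := by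
  simp_rw [← log_max_abs_one]
  exact hint

lemma tendsto_integral_max_sub_zero_atTop {f : Ω → ℝ} (hf : AEStronglyMeasurable f μ)
    (hf_pos : Integrable (fun ω => max (f ω) 0) μ) :
    Tendsto (fun K : ℝ => ∫ ω, max (f ω - K) 0 ∂μ) atTop (nhds 0) := by
  have hdom := tendsto_integral_filter_of_dominated_convergence (μ := μ) (l := atTop)
    (F := fun (K : ℝ) ω => max (f ω - K) 0) (f := fun _ => (0 : ℝ))
    (bound := fun ω => max (f ω) 0) (Eventually.of_forall fun K => by fun_prop) ?_ hf_pos ?_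
  · simpa using hdom
  · filter_upwards [eventually_ge_atTop (0 : ℝ)] with K hK
    refine ae_of_all _ fun ω => ?_
    rw [norm_of_nonneg (le_max_right _ _)]
    exact max_le_max (by linarith) le_rfl
  · refine ae_of_all _ fun ω => tendsto_const_nhds.congr' ?_
    filter_upwards [eventually_ge_atTop (f ω)] with K hK
    exact (max_eq_right (by linarith)).symm

lemma le_measureReal_iInter_of_antitone [IsFiniteMeasure μ] {E : ℕ → Set Ω}
    (hE : ∀ n, NullMeasurableSet (E n) μ) (hanti : Antitone E) {c : ℝ}
    (hc : ∀ n, c ≤ μ.real (E n)) : c ≤ μ.real (⋂ n, E n) :=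
  ge_of_tendsto' ((ENNReal.tendsto_toReal (measure_ne_top μ _)).comp
    (tendsto_measure_iInter_atTop hE hanti ⟨0, measure_ne_top μ _⟩)) hc

lemma sum_measureReal_exp_lt_abs_le [IsFiniteMeasure μ] {Y : Ω → ℝ} (hY : AEMeasurable Y μ)
    (hint : Integrable (fun ω => log (max |Y ω| 1)) μ) {δ : ℝ} (hδ : 0 < δ) {K : ℝ}
    (hK : 0 ≤ K) (n : ℕ) :
    ∑ j ∈ Finset.Icc 1 n, μ.real {ω | exp (δ * j + K) < |Y ω|}
      ≤ δ⁻¹ * ∫ ω, max (log |Y ω| - K) 0 ∂μ := by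
  have hint_pos := integrable_max_log_abs_zero hint
  have hlogY : AEStronglyMeasurable (fun ω => log |Y ω|) μ :=
    (measurable_log.comp_aemeasurable hY.abs).aestronglyMeasurable
  calc ∑ j ∈ Finset.Icc 1 n, μ.real {ω | exp (δ * j + K) < |Y ω|}
      ≤ ∑ j ∈ Finset.Icc 1 n, μ.real {ω | δ * j ≤ max (log |Y ω| - K) 0} := by
        refine Finset.sum_le_sum fun j _ => measureReal_mono fun ω hω => ?_
        have hlog := (lt_log_iff_exp_lt ((exp_pos _).trans hω)).2 hω
        exact le_max_of_le_left (show δ * j ≤ log |Y ω| - K by linarith)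
    _ ≤ (∫ ω, max (log |Y ω| - K) 0 ∂μ) / δ :=
        sum_measureReal_mul_le_le_integral_div (hint_pos.max_sub_const_zero hlogY hK)
          (fun ω => le_max_right _ _) hδ n
    _ = δ⁻¹ * ∫ ω, max (log |Y ω| - K) 0 ∂μ := div_eq_inv_mul _ _

end Integral

section Barrier

variable {Ω : Type*} [MeasurableSpace Ω] {P : Measure Ω} [IsProbabilityMeasure P]
  {B : ℕ → Ω → ℝ}

lemma measureReal_forall_abs_le_eq_prod (hiid : iIndepFun B P)
    (hid : ∀ n, IdentDistrib (B n) (B 1) P P) (c : ℕ → ℝ) (n : ℕ) :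
    P.real {ω | ∀ j : ℕ, 1 ≤ j → j ≤ n → |B j ω| ≤ c j}
      = ∏ j ∈ Finset.Icc 1 n, (1 - P.real {ω | c j < |B 1 ω|}) := by
  set s : ℕ → Set ℝ := fun j => {x | |x| ≤ c j}
  have hs : ∀ j, MeasurableSet (s j) := fun j => measurableSet_le measurable_abs measurable_const
  have hE : {ω | ∀ j : ℕ, 1 ≤ j → j ≤ n → |B j ω| ≤ c j}
      = ⋂ j ∈ Finset.Icc 1 n, B j ⁻¹' s j := by
    ext ω
    simp [s]
  rw [hE, measureReal_def, hiid.meas_biInter fun j _ => ⟨s j, hs j, rfl⟩, ENNReal.toReal_prod]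
  refine Finset.prod_congr rfl fun j _ => ?_
  have hcompl : {ω | c j < |B 1 ω|} = (B 1 ⁻¹' s j)ᶜ := by
    ext ω
    simp [s]
  rw [(hid j).measure_mem_eq (hs j), ← measureReal_def, hcompl,
    probReal_compl_eq_one_sub₀ ((hid 1).aemeasurable_fst.nullMeasurable (hs j)), sub_sub_cancel]

variable (hiid : iIndepFun B P) (hid : ∀ n, IdentDistrib (B n) (B 1) P P)
  (hint : Integrable (fun ω => log (max |B 1 ω| 1)) P) {δ : ℝ} (hδ : 0 < δ) {K : ℝ} (hK : 0 ≤ K)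
include hiid hid hint hδ hK

lemma exp_neg_le_measureReal_forall_abs_le
    (hhalf : P.real {ω | log |B 1 ω| > K} < 1 / 2) (n : ℕ) :
    exp (-2 * δ⁻¹ * ∫ ω, max (log |B 1 ω| - K) 0 ∂P)
      ≤ P.real {ω | ∀ j : ℕ, 1 ≤ j → j ≤ n → |B j ω| ≤ exp (δ * j + K)} := by
  rw [measureReal_forall_abs_le_eq_prod hiid hid]
  have hsum := sum_measureReal_exp_lt_abs_le (hid 1).aemeasurable_fst hint hδ hK n
  refine le_trans (exp_le_exp.2 (by linarith)) (Finset.exp_neg_two_mul_sum_le_prod_one_sub _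
    (fun j _ => measureReal_nonneg) fun j _ => (measureReal_mono fun ω hω => ?_).trans hhalf.le)
  have hlog := (lt_log_iff_exp_lt ((exp_pos _).trans hω)).2 hω
  show K < log |B 1 ω|
  linarith [show 0 ≤ δ * j by positivity]

lemma one_sub_le_measureReal_forall_abs_le :
    1 - δ⁻¹ * ∫ ω, max (log |B 1 ω| - K) 0 ∂P
      ≤ P.real {ω | ∀ j : ℕ, 1 ≤ j → |B j ω| ≤ exp (δ * j + K)} := by
  have hfin : ∀ n : ℕ, 1 - δ⁻¹ * ∫ ω, max (log |B 1 ω| - K) 0 ∂P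
      ≤ P.real {ω | ∀ j : ℕ, 1 ≤ j → j ≤ n → |B j ω| ≤ exp (δ * j + K)} := fun n => by
    rw [measureReal_forall_abs_le_eq_prod hiid hid]
    exact (sub_le_sub_left (sum_measureReal_exp_lt_abs_le (hid 1).aemeasurable_fst hint hδ hK n)
      1).trans (Finset.one_sub_sum_le_prod_one_sub _ (fun _ _ => measureReal_nonneg)
        fun _ _ => measureReal_le_one)
  have hE : {ω | ∀ j : ℕ, 1 ≤ j → |B j ω| ≤ exp (δ * j + K)}
      = ⋂ n : ℕ, {ω | ∀ j : ℕ, 1 ≤ j → j ≤ n → |B j ω| ≤ exp (δ * j + K)} := by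
    ext ω
    simp only [mem_ofPred_eq, mem_iInter]
    exact ⟨fun h n j hj _ => h j hj, fun h j hj => h j j hj le_rfl⟩
  rw [hE]
  refine le_measureReal_iInter_of_antitone (fun n => ?_) (fun a b hab ω hω => ?_) hfin
  · simp only [ofPred_forall]
    exact .iInter fun j => .iInter fun _ => .iInter fun _ =>
      nullMeasurableSet_le (hid j).aemeasurable_fst.abs aemeasurable_const
  · exact fun j hj hjb => hω j hj (hjb.trans hab)

end Barrier

theorem perturbation_barrier_bound_general {Ω : Type*} [MeasurableSpace Ω]
    (P : Measure Ω) [IsProbabilityMeasure P]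
    (B : ℕ → Ω → ℝ)
    (hiid : iIndepFun B P)
    (hid : ∀ n, IdentDistrib (B n) (B 1) P P)
    (hintB : Integrable (fun ω => Real.log (max |B 1 ω| 1)) P)
    (δ : ℝ) (hδ : 0 < δ) :
    (∀ K : ℝ, 0 < K → (P {ω | Real.log |B 1 ω| > K}).toReal < 1 / 2 →
      ∀ n : ℕ, 1 ≤ n →
        -2 * δ⁻¹ * (∫ ω, max (Real.log |B 1 ω| - K) 0 ∂P) ≤
          Real.log ((P {ω | ∀ j : ℕ, 1 ≤ j → j ≤ n →
            |B j ω| ≤ Real.exp (δ * (j : ℝ) + K)}).toReal)) ∧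
    Tendsto (fun K : ℝ =>
        (P {ω | ∀ j : ℕ, 1 ≤ j → |B j ω| ≤ Real.exp (δ * (j : ℝ) + K)}).toReal)
      atTop (nhds 1) := by
  refine ⟨fun K hK hhalf n _ => ?_, ?_⟩
  · have h := exp_neg_le_measureReal_forall_abs_le hiid hid hintB hδ hK.le hhalf n
    exact (le_log_iff_exp_le ((exp_pos _).trans_le h)).2 h
  · have hlogB : AEStronglyMeasurable (fun ω => log |B 1 ω|) P :=
      (measurable_log.comp_aemeasurable (hid 1).aemeasurable_fst.abs).aestronglyMeasurable
    have hlow : Tendsto (fun K : ℝ => 1 - δ⁻¹ * ∫ ω, max (log |B 1 ω| - K) 0 ∂P)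
        atTop (nhds 1) := by
      simpa using ((tendsto_integral_max_sub_zero_atTop hlogB
        (integrable_max_log_abs_zero hintB)).const_mul δ⁻¹).const_sub 1
    refine tendsto_of_tendsto_of_tendsto_of_le_of_le' hlow tendsto_const_nhds ?_
      (Eventually.of_forall fun K => measureReal_le_one)
    filter_upwards [eventually_ge_atTop 0] with K hK
    exact one_sub_le_measureReal_forall_abs_le hiid hid hintB hδ hK

/-- lower bound for the probability that i.i.d. perturbations stay below an
exponentially growing barrier, and convergence of this probability to 1 as K → ∞. -/
theorem perturbation_barrier_bound {Ω : Type*} [MeasurableSpace Ω]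
    (P : Measure Ω) [IsProbabilityMeasure P]
    (B : ℕ → Ω → ℝ) (hmeas : ∀ n, Measurable (B n))
    (hiid : iIndepFun B P)
    (hid : ∀ n, IdentDistrib (B n) (B 1) P P)
    (hintB : Integrable (fun ω => Real.log (max |B 1 ω| 1)) P)
    (δ : ℝ) (hδ : 0 < δ) :
    (∀ K : ℝ, 0 < K → (P {ω | Real.log |B 1 ω| > K}).toReal < 1 / 2 →
      ∀ n : ℕ, 1 ≤ n →
        -2 * δ⁻¹ * (∫ ω, max (Real.log |B 1 ω| - K) 0 ∂P) ≤
          Real.log ((P {ω | ∀ j : ℕ, 1 ≤ j → j ≤ n →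
            |B j ω| ≤ Real.exp (δ * (j : ℝ) + K)}).toReal)) ∧
    Tendsto (fun K : ℝ =>
        (P {ω | ∀ j : ℕ, 1 ≤ j → |B j ω| ≤ Real.exp (δ * (j : ℝ) + K)}).toReal)
      atTop (nhds 1) :=
  perturbation_barrier_bound_general P B hiid hid hintB δ hδ
end

section
/- Let {Ψₙ}_{n≥1} be an i.i.d. sequence of random Lipschitz functions ℝ → ℝ with E[log(Lip(Ψ₁))] < 0, satisfying A_n t + B_n − D_n ≤ Ψ_n(t) ≤ A_n t⁺ + B_n⁺ + D_n for all t, with A_n, D_n ≥ 0, and E[log⁺|B ± D|] < ∞. Then the backward iterations Ψ₁ ∘ Ψ₂ ∘ ⋯ ∘ Ψₙ(R₀) converge almost surely as n → ∞ to a limit R that does not depend on the initial value R₀; consequently the Markov chain R_{n+1} = Ψ_{n+1}(R_n) has a unique stationary distribution, which solves R =_d Ψ(R) with R independent of Ψ. -/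
/-!
The backward iterate `backIter Ψ ω n` is `∏_{k<n} L_k`-Lipschitz. By the strong law,
`∏_{k<n} L_k` decays like `exp (n 𝔼[log L])` with `𝔼[log L] < 0`, while
`|Ψ_n(0)| ≤ max (|B_n - D_n|, |B_n + D_n|)` grows subexponentially because its logarithm is
integrable. So `backIter Ψ ω n 0` is Cauchy, and every starting point is drawn to the same
limit `R`.

For the laws: `Ψ_0` is independent of the shifted sequence `(Ψ_{k+1})_k`, which has the law of
`(Ψ_k)_k`. Hence `n + 1` backward steps started from `ν` have the law of `Ψ(Y)`, with `Y`
independent of `Ψ` and distributed as `n` steps started from `ν`. Starting at `0` and letting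
`n → ∞` shows that the law of `R` is stationary; starting from a stationary `ν`, every step has
law `ν`, and in the limit `ν` is the law of `R`.
-/

open MeasureTheory ProbabilityTheory Filter Real Set

/-- Backward iteration: `backIter Ψ ω n = Ψ 0 ω ∘ Ψ 1 ω ∘ ⋯ ∘ Ψ (n-1) ω`. -/
noncomputable def backIter {Ω : Type*} (Ψ : ℕ → Ω → ℝ → ℝ) (ω : Ω) : ℕ → ℝ → ℝ
  | 0 => id
  | n + 1 => fun t => backIter Ψ ω n (Ψ n ω t)

section BackwardIteration

variable {Ω : Type*}

lemma backIter_congr {Ω' : Type*} {Ψ : ℕ → Ω → ℝ → ℝ} {Ψ' : ℕ → Ω' → ℝ → ℝ} {ω : Ω} {ω' : Ω'}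
    (h : ∀ k, Ψ k ω = Ψ' k ω') (n : ℕ) :
    backIter Ψ ω n = backIter Ψ' ω' n := by
  induction n with
  | zero => rfl
  | succ n ih => funext t; simp only [backIter, ih, h]

lemma backIter_succ' (Ψ : ℕ → Ω → ℝ → ℝ) (ω : Ω) (n : ℕ) (t : ℝ) :
    backIter Ψ ω (n + 1) t = Ψ 0 ω (backIter (fun k => Ψ (k + 1)) ω n t) := by
  induction n generalizing t with
  | zero => rfl
  | succ n ih => exact ih (Ψ (n + 1) ω t)

lemma measurable_backIter [MeasurableSpace Ω] {Ψ : ℕ → Ω → ℝ → ℝ}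
    (hΨ : ∀ n, Measurable fun p : Ω × ℝ => Ψ n p.1 p.2) (n : ℕ) :
    Measurable fun p : Ω × ℝ => backIter Ψ p.1 n p.2 := by
  induction n with
  | zero => exact measurable_snd
  | succ n ih => exact ih.comp (measurable_fst.prodMk (hΨ n))

variable (Ψ : ℕ → Ω → ℝ → ℝ) (ω : Ω) {L : ℕ → ℝ} (hL : ∀ n, 0 ≤ L n)
  (hLip : ∀ n t₁ t₂, |Ψ n ω t₁ - Ψ n ω t₂| ≤ L n * |t₁ - t₂|)
include hL hLip

lemma abs_backIter_sub_le (n : ℕ) (s t : ℝ) :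
    |backIter Ψ ω n s - backIter Ψ ω n t| ≤ (∏ k ∈ Finset.range n, L k) * |s - t| := by
  induction n generalizing s t with
  | zero => simp [backIter]
  | succ n ih =>
    calc |backIter Ψ ω n (Ψ n ω s) - backIter Ψ ω n (Ψ n ω t)|
        ≤ (∏ k ∈ Finset.range n, L k) * |Ψ n ω s - Ψ n ω t| := ih _ _
      _ ≤ (∏ k ∈ Finset.range n, L k) * (L n * |s - t|) :=
        mul_le_mul_of_nonneg_left (hLip n s t) (Finset.prod_nonneg fun k _ => hL k)
      _ = (∏ k ∈ Finset.range (n + 1), L k) * |s - t| := by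
        rw [Finset.prod_range_succ, mul_assoc]

lemma cauchySeq_backIter_zero
    (hsum : Summable fun n => (∏ k ∈ Finset.range n, L k) * |Ψ n ω 0|) :
    CauchySeq fun n => backIter Ψ ω n 0 := by
  refine cauchySeq_of_dist_le_of_summable _ (fun n => ?_) hsum
  have h := abs_backIter_sub_le Ψ ω hL hLip n 0 (Ψ n ω 0)
  rwa [zero_sub, abs_neg, ← Real.dist_eq] at h

lemma tendsto_backIter_of_tendsto_zero
    (hprod : Tendsto (fun n => ∏ k ∈ Finset.range n, L k) atTop (nhds 0)) {r : ℝ}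
    (hr : Tendsto (fun n => backIter Ψ ω n 0) atTop (nhds r)) (t : ℝ) :
    Tendsto (fun n => backIter Ψ ω n t) atTop (nhds r) := by
  have hdiff : Tendsto (fun n => backIter Ψ ω n t - backIter Ψ ω n 0) atTop (nhds 0) := by
    refine squeeze_zero_norm (fun n => ?_) (by simpa using hprod.mul_const |t|)
    simpa using abs_backIter_sub_le Ψ ω hL hLip n t 0
  simpa using hr.add hdiff

end BackwardIteration

section Averages

lemma prod_le_exp_sum_log {ι : Type*} (s : Finset ι) {L : ι → ℝ}
    (hL : ∀ i ∈ s, 0 ≤ L i) :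
    ∏ i ∈ s, L i ≤ Real.exp (∑ i ∈ s, Real.log (L i)) := by
  rw [Real.exp_sum]
  exact Finset.prod_le_prod hL fun i _ => Real.le_exp_log (L i)

lemma eventually_le_natCast_mul_of_tendsto_div {y : ℕ → ℝ} {m c : ℝ}
    (h : Tendsto (fun n => y n / n) atTop (nhds m)) (hmc : m < c) :
    ∀ᶠ n : ℕ in atTop, y n ≤ n * c := by
  filter_upwards [(tendsto_order.1 h).2 c hmc, eventually_gt_atTop 0] with n hn hn0
  rw [div_lt_iff₀ (by exact_mod_cast hn0)] at hn
  linarith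

lemma tendsto_div_natCast_of_tendsto_avg {x : ℕ → ℝ} {c : ℝ}
    (h : Tendsto (fun n => (∑ k ∈ Finset.range n, x k) / n) atTop (nhds c)) :
    Tendsto (fun n => x n / n) atTop (nhds 0) := by
  have hratio : Tendsto (fun n : ℕ => ((n : ℝ) + 1) / n) atTop (nhds 1) := by
    simpa using (tendsto_natCast_div_add_atTop (1 : ℝ)).inv₀ one_ne_zero
  have hshift := (h.comp (tendsto_add_atTop_nat 1)).mul hratio
  rw [mul_one] at hshift
  have hdiff := hshift.sub h
  rw [sub_self] at hdiff
  refine hdiff.congr' ?_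
  filter_upwards [eventually_gt_atTop 0] with n hn
  have hn' : (n : ℝ) ≠ 0 := by positivity
  simp only [Function.comp_apply, Finset.sum_range_succ, Nat.cast_add, Nat.cast_one]
  field_simp
  ring

variable {L : ℕ → ℝ} (hL : ∀ n, 0 ≤ L n) {m : ℝ}
  (havg : Tendsto (fun n => (∑ k ∈ Finset.range n, Real.log (L k)) / n) atTop (nhds m))
include hL havg

lemma eventually_prod_le_exp_pow {c : ℝ} (hmc : m < c) :
    ∀ᶠ n : ℕ in atTop, ∏ k ∈ Finset.range n, L k ≤ Real.exp c ^ n := by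
  filter_upwards [eventually_le_natCast_mul_of_tendsto_div havg hmc] with n hn
  calc ∏ k ∈ Finset.range n, L k ≤ Real.exp (∑ k ∈ Finset.range n, Real.log (L k)) :=
        prod_le_exp_sum_log _ fun k _ => hL k
    _ ≤ Real.exp (n * c) := Real.exp_le_exp.2 hn
    _ = Real.exp c ^ n := Real.exp_nat_mul c n

lemma tendsto_prod_zero_of_tendsto_avg_log (hm : m < 0) :
    Tendsto (fun n => ∏ k ∈ Finset.range n, L k) atTop (nhds 0) :=
  squeeze_zero' (Eventually.of_forall fun n => Finset.prod_nonneg fun k _ => hL k)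
    (eventually_prod_le_exp_pow hL havg (show m < m / 2 by linarith))
    (tendsto_pow_atTop_nhds_zero_of_lt_one (Real.exp_pos _).le
      (Real.exp_lt_one_iff.2 (by linarith)))

lemma summable_prod_mul_exp_of_tendsto_avg_log (hm : m < 0) {x : ℕ → ℝ}
    (hx : Tendsto (fun n => x n / n) atTop (nhds 0)) :
    Summable fun n => (∏ k ∈ Finset.range n, L k) * Real.exp (x n) := by
  refine Summable.of_norm_bounded_eventually_nat (summable_geometric_of_lt_one
    (Real.exp_pos (m / 4)).le (Real.exp_lt_one_iff.2 (by linarith))) ?_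
  filter_upwards [eventually_prod_le_exp_pow hL havg (show m < m / 2 by linarith),
    eventually_le_natCast_mul_of_tendsto_div hx (show (0 : ℝ) < -m / 4 by linarith)]
    with n hprod hx
  have hexp : Real.exp (x n) ≤ Real.exp (-m / 4) ^ n := by
    rw [← Real.exp_nat_mul]; exact Real.exp_le_exp.2 hx
  calc ‖(∏ k ∈ Finset.range n, L k) * Real.exp (x n)‖
      = (∏ k ∈ Finset.range n, L k) * Real.exp (x n) :=
        Real.norm_of_nonneg (mul_nonneg (Finset.prod_nonneg fun k _ => hL k) (Real.exp_pos _).le)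
    _ ≤ Real.exp (m / 2) ^ n * Real.exp (-m / 4) ^ n :=
        mul_le_mul hprod hexp (Real.exp_pos _).le (by positivity)
    _ = Real.exp (m / 4) ^ n := by rw [← mul_pow, ← Real.exp_add]; ring_nf

end Averages

lemma abs_le_max_abs_sub_abs_add {b d y : ℝ} (h₁ : b - d ≤ y) (h₂ : y ≤ max b 0 + d) :
    |y| ≤ max |b - d| |b + d| := by
  rw [abs_le]
  refine ⟨by linarith [neg_abs_le (b - d), le_max_left |b - d| |b + d|], ?_⟩
  rcases le_total 0 b with hb | hb
  · rw [max_eq_left hb] at h₂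
    linarith [le_abs_self (b + d), le_max_right |b - d| |b + d|]
  · rw [max_eq_right hb] at h₂
    linarith [neg_le_abs (b - d), le_max_left |b - d| |b + d|]

lemma max_le_exp_log_max_one_add (a b : ℝ) :
    max a b ≤ Real.exp (Real.log (max a 1) + Real.log (max b 1)) := by
  have ha : 1 ≤ max a 1 := le_max_right a 1
  have hb : 1 ≤ max b 1 := le_max_right b 1
  rw [Real.exp_add, Real.exp_log (by linarith), Real.exp_log (by linarith)]
  exact max_le ((le_max_left a 1).trans (le_mul_of_one_le_right (by linarith) hb))
    ((le_max_left b 1).trans (le_mul_of_one_le_left (by linarith) ha))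

lemma strong_law_ae_comp {Ω β : Type*} [MeasurableSpace Ω] [MeasurableSpace β]
    {P : Measure Ω} {Y : ℕ → Ω → β} (hind : iIndepFun Y P) (hid : ∀ n, IdentDistrib (Y n) (Y 0) P P)
    {g : β → ℝ} (hg : Measurable g) (hint : Integrable (fun ω => g (Y 0 ω)) P) :
    ∀ᵐ ω ∂P, Tendsto (fun n : ℕ => (∑ k ∈ Finset.range n, g (Y k ω)) / n) atTop
      (nhds (∫ ω, g (Y 0 ω) ∂P)) :=
  strong_law_ae_real (fun n ω => g (Y n ω)) hint
    (fun _ _ hij => (hind.indepFun hij).comp hg hg) fun n => (hid n).comp hg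

lemma exists_ae_tendsto_backIter {Ω : Type*} [MeasurableSpace Ω] {P : Measure Ω}
    {Ψ : ℕ → Ω → ℝ → ℝ} (hΨ : ∀ n, Measurable fun p : Ω × ℝ => Ψ n p.1 p.2)
    {L X : ℕ → Ω → ℝ}
    (hLip : ∀ n ω t₁ t₂, |Ψ n ω t₁ - Ψ n ω t₂| ≤ L n ω * |t₁ - t₂|)
    (hX : ∀ n ω, |Ψ n ω 0| ≤ Real.exp (X n ω)) {m : ℝ} (hm : m < 0)
    (hLavg : ∀ᵐ ω ∂P, Tendsto (fun n => (∑ k ∈ Finset.range n, Real.log (L k ω)) / n) atTop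
      (nhds m))
    (hXavg : ∀ᵐ ω ∂P, Tendsto (fun n => X n ω / n) atTop (nhds 0)) :
    ∃ R : Ω → ℝ, Measurable R ∧
      ∀ᵐ ω ∂P, ∀ t, Tendsto (fun n => backIter Ψ ω n t) atTop (nhds (R ω)) := by
  have hL (ω : Ω) (n : ℕ) : 0 ≤ L n ω := by simpa using (abs_nonneg _).trans (hLip n ω 1 0)
  have hcontract : ∀ᵐ ω ∂P, Tendsto (fun n => ∏ k ∈ Finset.range n, L k ω) atTop (nhds 0) ∧
      Summable fun n => (∏ k ∈ Finset.range n, L k ω) * |Ψ n ω 0| := by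
    filter_upwards [hLavg, hXavg] with ω hLω hXω
    refine ⟨tendsto_prod_zero_of_tendsto_avg_log (hL ω) hLω hm,
      (summable_prod_mul_exp_of_tendsto_avg_log (hL ω) hLω hm hXω).of_nonneg_of_le
        (fun n => ?_) fun n => ?_⟩
    · exact mul_nonneg (Finset.prod_nonneg fun k _ => hL ω k) (abs_nonneg _)
    · exact mul_le_mul_of_nonneg_left (hX n ω) (Finset.prod_nonneg fun k _ => hL ω k)
  obtain ⟨R, hR, hR0⟩ := measurable_limit_of_tendsto_metrizable_ae
    (f := fun n ω => backIter Ψ ω n 0)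
    (fun n => ((measurable_backIter hΨ n).comp measurable_prodMk_right).aemeasurable)
    (by
      filter_upwards [hcontract] with ω h
      exact cauchySeq_tendsto_of_complete
        (cauchySeq_backIter_zero Ψ ω (hL ω) (hLip · ω) h.2))
  refine ⟨R, hR, ?_⟩
  filter_upwards [hcontract, hR0] with ω h hω
  exact tendsto_backIter_of_tendsto_zero Ψ ω (hL ω) (hLip · ω) h.1 hω

lemma map_eq_map_of_ae_tendsto {α β : Type*} [MeasurableSpace α] [MeasurableSpace β]
    {μ : Measure α} {ν : Measure β} [IsProbabilityMeasure μ] [IsProbabilityMeasure ν]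
    {f : ℕ → α → ℝ} {g : ℕ → β → ℝ} {f' : α → ℝ} {g' : β → ℝ}
    (hf : ∀ n, AEMeasurable (f n) μ) (hg : ∀ n, AEMeasurable (g n) ν)
    (hf' : AEMeasurable f' μ) (hg' : AEMeasurable g' ν)
    (hft : ∀ᵐ a ∂μ, Tendsto (fun n => f n a) atTop (nhds (f' a)))
    (hgt : ∀ᵐ b ∂ν, Tendsto (fun n => g n b) atTop (nhds (g' b)))
    (heq : ∀ n, μ.map (f n) = ν.map (g n)) :
    μ.map f' = ν.map g' := by
  have hg_lim := tendstoInDistribution_of_ae_tendsto hg hg' hgt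
  refine tendstoInDistribution_unique f (tendstoInDistribution_of_ae_tendsto hf hf' hft)
    ⟨hf, hg', ?_⟩
  exact hg_lim.tendsto.congr fun n => Subtype.ext (heq n).symm

noncomputable def floorApprox (m : ℕ) (t : ℝ) : ℝ := ⌊t * (m + 1)⌋ / (m + 1)

lemma tendsto_floorApprox (t : ℝ) : Tendsto (fun m => floorApprox m t) atTop (nhds t) := by
  have hlow : Tendsto (fun m : ℕ => t - 1 / ((m : ℝ) + 1)) atTop (nhds t) := by
    simpa using (tendsto_const_nhds (x := t)).sub tendsto_one_div_add_atTop_nhds_zero_nat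
  refine tendsto_of_tendsto_of_tendsto_of_le_of_le hlow tendsto_const_nhds (fun m => ?_)
    (fun m => ?_)
  · have hm : (0 : ℝ) < m + 1 := by positivity
    rw [floorApprox, le_div_iff₀ hm, sub_mul, one_div_mul_cancel hm.ne']
    exact (Int.sub_one_lt_floor _).le
  · have hm : (0 : ℝ) < m + 1 := by positivity
    rw [floorApprox, div_le_iff₀ hm]
    exact Int.floor_le _

lemma measurable_apply_floorApprox (m : ℕ) :
    Measurable fun p : (ℝ → ℝ) × ℝ => p.1 (floorApprox m p.2) := by
  have hint : Measurable fun q : (ℝ → ℝ) × ℤ => q.1 (q.2 / ((m : ℝ) + 1)) :=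
    measurable_from_prod_countable_left fun j => measurable_pi_apply ((j : ℝ) / ((m : ℝ) + 1))
  exact hint.comp (measurable_fst.prodMk
    (Int.measurable_floor.comp (measurable_snd.mul measurable_const)))

/-- Evaluation `(f, t) ↦ f t` is not measurable for the product σ-algebra on `ℝ → ℝ`; this
measurable substitute agrees with it on continuous `f`. -/
noncomputable def limEval (f : ℝ → ℝ) (t : ℝ) : ℝ :=
  limUnder atTop fun m => f (floorApprox m t)

lemma measurable_limEval : Measurable fun p : (ℝ → ℝ) × ℝ => limEval p.1 p.2 :=
  (StronglyMeasurable.limUnder fun m =>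
    (measurable_apply_floorApprox m).stronglyMeasurable).measurable

lemma limEval_of_continuous {f : ℝ → ℝ} (hf : Continuous f) : limEval f = f :=
  funext fun t => ((hf.tendsto t).comp (tendsto_floorApprox t)).limUnder_eq

lemma MeasureTheory.Measure.prod_map_left {α β γ : Type*} [MeasurableSpace α]
    [MeasurableSpace β] [MeasurableSpace γ] (μ : Measure α) (ν : Measure γ) [SFinite μ]
    [SFinite ν] {f : α → β} (hf : Measurable f) :
    (μ.map f).prod ν = (μ.prod ν).map (Prod.map f id) := by
  have h := Measure.map_prod_map μ ν hf measurable_id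
  rwa [Measure.map_id] at h

lemma MeasureTheory.Measure.prod_map_right {α β γ : Type*} [MeasurableSpace α]
    [MeasurableSpace β] [MeasurableSpace γ] (μ : Measure α) (ν : Measure γ) [SFinite μ]
    [SFinite ν] {g : γ → β} (hg : Measurable g) :
    μ.prod (ν.map g) = (μ.prod ν).map (Prod.map id g) := by
  have h := Measure.map_prod_map μ ν measurable_id hg
  rwa [Measure.map_id] at h

lemma measurable_uncurry_of_continuous {Ω : Type*} [MeasurableSpace Ω] {Φ : Ω → ℝ → ℝ}
    (hΦ : Measurable Φ) (hcont : ∀ ω, Continuous (Φ ω)) :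
    Measurable fun p : Ω × ℝ => Φ p.1 p.2 := by
  convert measurable_limEval.comp (hΦ.prodMap measurable_id) using 1
  funext p
  simp [limEval_of_continuous (hcont p.1)]

lemma map_limEval_prod_map {Ω Ω' : Type*} [MeasurableSpace Ω] [MeasurableSpace Ω']
    {P : Measure Ω} {ρ : Measure Ω'} [SFinite P] [SFinite ρ] {Φ : Ω → ℝ → ℝ}
    (hΦ : Measurable Φ) (hcont : ∀ ω, Continuous (Φ ω)) {Y : Ω' → ℝ} (hY : Measurable Y) :
    ((P.map Φ).prod (ρ.map Y)).map (fun q => limEval q.1 q.2) =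
      (P.prod ρ).map fun p => Φ p.1 (Y p.2) := by
  rw [Measure.map_prod_map _ _ hΦ hY, Measure.map_map measurable_limEval (hΦ.prodMap hY)]
  congr 1
  funext p
  simp [limEval_of_continuous (hcont p.1)]

namespace ProbabilityTheory

variable {Ω β : Type*} [MeasurableSpace Ω] [MeasurableSpace β] {P : Measure Ω}
  {X : ℕ → Ω → β}

lemma iIndepFun.indepFun_head_tail (hX : ∀ n, Measurable (X n)) (h : iIndepFun X P) :
    IndepFun (X 0) (fun ω k => X (k + 1) ω) P := by
  rw [IndepFun_iff_Indep]
  have hsplit := indep_iSup_of_disjoint (fun n => (hX n).comap_le) h.iIndep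
    (S := {0}) (T := Set.range Nat.succ) (by simp)
  convert hsplit using 1
  · simp
  · simp only [MeasurableSpace.pi, MeasurableSpace.comap_iSup, MeasurableSpace.comap_comp,
      iSup_range]
    rfl

variable [IsProbabilityMeasure P] (hX : ∀ n, Measurable (X n)) (h : iIndepFun X P)
  (hid : ∀ n, P.map (X n) = P.map (X 0))
include hX h hid

lemma iIndepFun.map_head_tail :
    P.map (fun ω => (X 0 ω, fun k => X (k + 1) ω)) =
      (P.map (X 0)).prod (P.map fun ω k => X k ω) := by
  have htail : Measurable fun ω k => X (k + 1) ω := measurable_pi_lambda _ fun k => hX _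
  rw [(indepFun_iff_map_prod_eq_prod_map_map (hX 0).aemeasurable htail.aemeasurable).1
    (h.indepFun_head_tail hX)]
  congr 1
  rw [(h.precomp Nat.succ_injective).map_fun_eq_infinitePi_map fun k => hX _,
    h.map_fun_eq_infinitePi_map hX]
  simp only [hid]

lemma iIndepFun.map_head_tail_prod {γ : Type*} [MeasurableSpace γ] (ν : Measure γ)
    [SFinite ν] :
    (P.prod ν).map (fun p => (X 0 p.1, ((fun k => X (k + 1) p.1), p.2))) =
      (P.map (X 0)).prod ((P.map fun ω k => X k ω).prod ν) := by
  have hsplit : Measurable fun ω => (X 0 ω, fun k => X (k + 1) ω) :=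
    (hX 0).prodMk (measurable_pi_lambda _ fun k => hX _)
  rw [← Measure.prodAssoc_prod, ← h.map_head_tail hX hid, Measure.prod_map_left _ _ hsplit,
    Measure.map_map MeasurableEquiv.prodAssoc.measurable (hsplit.prodMap measurable_id)]
  rfl

end ProbabilityTheory

/-- Backward iteration on the sequence space, made measurable by evaluating through `limEval`. -/
noncomputable def seqIter (n : ℕ) (p : (ℕ → ℝ → ℝ) × ℝ) : ℝ :=
  backIter (fun k s => limEval (s k)) p.1 n p.2

lemma measurable_seqIter (n : ℕ) : Measurable (seqIter n) :=
  measurable_backIter (fun k =>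
    measurable_limEval.comp (f := fun p : (ℕ → ℝ → ℝ) × ℝ => (p.1 k, p.2))
      (((measurable_pi_apply k).comp measurable_fst).prodMk measurable_snd)) n

lemma backIter_eq_seqIter {Ω : Type*} {Ψ : ℕ → Ω → ℝ → ℝ} {ω : Ω}
    (hcont : ∀ k, Continuous (Ψ k ω)) (n : ℕ) (t : ℝ) :
    backIter Ψ ω n t = seqIter n ((fun k => Ψ k ω), t) :=
  congrFun (backIter_congr (fun k => (limEval_of_continuous (hcont k)).symm) n) t

section MarkovStep

variable {Ω : Type*} [MeasurableSpace Ω] {P : Measure Ω} [IsProbabilityMeasure P]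
  {Ψ : ℕ → Ω → ℝ → ℝ} (hΨ : ∀ n, Measurable (Ψ n))
  (hcont : ∀ n ω, Continuous (Ψ n ω))
include hΨ hcont

lemma measurable_backIter_of_continuous (n : ℕ) :
    Measurable fun p : Ω × ℝ => backIter Ψ p.1 n p.2 :=
  measurable_backIter (fun k => measurable_uncurry_of_continuous (hΨ k) (hcont k)) n

lemma map_backIter_prod (ν : Measure ℝ) [SFinite ν] (n : ℕ) :
    (P.prod ν).map (fun p => backIter Ψ p.1 n p.2) =
      ((P.map fun ω k => Ψ k ω).prod ν).map (seqIter n) := by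
  have hseq : Measurable fun ω k => Ψ k ω := measurable_pi_lambda _ hΨ
  rw [Measure.prod_map_left _ _ hseq,
    Measure.map_map (measurable_seqIter n) (hseq.prodMap measurable_id)]
  congr 1
  funext p
  exact backIter_eq_seqIter (hcont · p.1) n p.2

variable (hind : iIndepFun Ψ P) (hid : ∀ n, P.map (Ψ n) = P.map (Ψ 0))
include hind hid

lemma map_backIter_succ (ν : Measure ℝ) [SFinite ν] (n : ℕ) :
    (P.prod ν).map (fun p => backIter Ψ p.1 (n + 1) p.2) =
      ((P.map (Ψ 0)).prod ((P.prod ν).map fun p => backIter Ψ p.1 n p.2)).map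
        fun q => limEval q.1 q.2 := by
  have hG : Measurable fun q : (ℝ → ℝ) × ((ℕ → ℝ → ℝ) × ℝ) => limEval q.1 (seqIter n q.2) :=
    measurable_limEval.comp
      (measurable_fst.prodMk ((measurable_seqIter n).comp measurable_snd))
  have hsplit : Measurable fun p : Ω × ℝ => (Ψ 0 p.1, ((fun k => Ψ (k + 1) p.1), p.2)) :=
    ((hΨ 0).comp measurable_fst).prodMk
      (((measurable_pi_lambda _ fun k => hΨ _).comp measurable_fst).prodMk measurable_snd)
  calc (P.prod ν).map (fun p => backIter Ψ p.1 (n + 1) p.2)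
      = ((P.prod ν).map fun p => (Ψ 0 p.1, ((fun k => Ψ (k + 1) p.1), p.2))).map
          fun q => limEval q.1 (seqIter n q.2) := by
        rw [Measure.map_map hG hsplit]
        congr 1
        funext p
        rw [Function.comp_apply, backIter_succ',
          backIter_eq_seqIter (Ψ := fun k => Ψ (k + 1)) (fun k => hcont _ p.1),
          limEval_of_continuous (hcont 0 p.1)]
    _ = ((P.map (Ψ 0)).prod (((P.map fun ω k => Ψ k ω).prod ν).map (seqIter n))).map
          fun q => limEval q.1 q.2 := by
        rw [hind.map_head_tail_prod hΨ hid, Measure.prod_map_right _ _ (measurable_seqIter n),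
          Measure.map_map measurable_limEval (measurable_id.prodMap (measurable_seqIter n))]
        rfl
    _ = _ := by rw [map_backIter_prod hΨ hcont]

lemma map_backIter_eq_of_stationary (ν : Measure ℝ) [SFinite ν]
    (hstat : (P.prod ν).map (fun p => Ψ 0 p.1 p.2) = ν) (n : ℕ) :
    (P.prod ν).map (fun p => backIter Ψ p.1 n p.2) = ν := by
  induction n with
  | zero => simp [backIter, Measure.map_snd_prod]
  | succ n ih =>
    have hstep := map_limEval_prod_map (P := P) (hΨ 0) (hcont 0) (ρ := ν) measurable_id
    rw [Measure.map_id] at hstep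
    rw [map_backIter_succ hΨ hcont hind hid, ih, hstep]
    exact hstat

lemma map_backIter_zero_succ (n : ℕ) :
    P.map (fun ω => backIter Ψ ω (n + 1) 0) =
      (P.prod P).map fun p => Ψ 0 p.1 (backIter Ψ p.2 n 0) := by
  have hstart (k : ℕ) : (P.prod (Measure.dirac 0)).map (fun p => backIter Ψ p.1 k p.2) =
      P.map fun ω => backIter Ψ ω k 0 := by
    rw [Measure.prod_dirac, Measure.map_map (measurable_backIter_of_continuous hΨ hcont k)
      measurable_prodMk_right]
    rfl
  rw [← hstart, map_backIter_succ hΨ hcont hind hid, hstart]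
  exact map_limEval_prod_map (Φ := Ψ 0) (Y := fun ω => backIter Ψ ω n 0) (hΨ 0) (hcont 0)
    ((measurable_backIter_of_continuous hΨ hcont n).comp measurable_prodMk_right)

lemma map_comp_limit_eq_map_limit {R : Ω → ℝ} (hR : Measurable R)
    (hRlim : ∀ᵐ ω ∂P, Tendsto (fun n => backIter Ψ ω n 0) atTop (nhds (R ω))) :
    (P.prod P).map (fun p => Ψ 0 p.1 (R p.2)) = P.map R := by
  have hY (n : ℕ) : Measurable fun ω => backIter Ψ ω n 0 :=
    (measurable_backIter_of_continuous hΨ hcont n).comp measurable_prodMk_right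
  have hΨ0 := measurable_uncurry_of_continuous (hΨ 0) (hcont 0)
  refine (map_eq_map_of_ae_tendsto (f := fun n ω => backIter Ψ ω (n + 1) 0)
    (g := fun n p => Ψ 0 p.1 (backIter Ψ p.2 n 0)) (fun n => (hY (n + 1)).aemeasurable)
    (fun n => (hΨ0.comp (measurable_fst.prodMk ((hY n).comp measurable_snd))).aemeasurable)
    hR.aemeasurable (hΨ0.comp (measurable_fst.prodMk (hR.comp measurable_snd))).aemeasurable
    ?_ ?_ (map_backIter_zero_succ hΨ hcont hind hid)).symm
  · filter_upwards [hRlim] with ω hω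
    exact hω.comp (tendsto_add_atTop_nat 1)
  · filter_upwards [Measure.quasiMeasurePreserving_snd.ae hRlim] with p hp
    exact ((hcont 0 p.1).tendsto _).comp hp

lemma eq_map_limit_of_stationary {R : Ω → ℝ} (hR : Measurable R)
    (hRlim : ∀ᵐ ω ∂P, ∀ t, Tendsto (fun n => backIter Ψ ω n t) atTop (nhds (R ω)))
    (ν : Measure ℝ) [IsProbabilityMeasure ν]
    (hstat : (P.prod ν).map (fun p => Ψ 0 p.1 p.2) = ν) :
    ν = P.map R := by
  have hlim := map_eq_map_of_ae_tendsto (μ := P.prod ν) (ν := ν)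
    (f := fun n p => backIter Ψ p.1 n p.2) (g := fun _ t => t)
    (fun n => (measurable_backIter_of_continuous hΨ hcont n).aemeasurable)
    (fun _ => aemeasurable_id) (hR.comp measurable_fst).aemeasurable aemeasurable_id
    (Measure.quasiMeasurePreserving_fst.ae hRlim |>.mono fun p hp => hp p.2)
    (.of_forall fun _ => tendsto_const_nhds)
    fun n => (map_backIter_eq_of_stationary hΨ hcont hind hid ν hstat n).trans
      Measure.map_id.symm
  rw [Measure.map_id, ← Measure.map_map hR measurable_fst, Measure.map_fst_prod] at hlim
  simpa using hlim.symm

end MarkovStep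

theorem backward_iterations_converge_unique_stationary_general {Ω : Type*} [MeasurableSpace Ω]
    (P : Measure Ω) [IsProbabilityMeasure P]
    (Ψ : ℕ → Ω → ℝ → ℝ) (A B D L : ℕ → Ω → ℝ)
    (hΨmeas : ∀ n, Measurable (fun p : Ω × ℝ => Ψ n p.1 p.2))
    (hbound : ∀ n ω t, A n ω * t + B n ω - D n ω ≤ Ψ n ω t ∧
        Ψ n ω t ≤ A n ω * max t 0 + max (B n ω) 0 + D n ω)
    (hLip : ∀ n ω t₁ t₂, |Ψ n ω t₁ - Ψ n ω t₂| ≤ L n ω * |t₁ - t₂|)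
    (hiid : iIndepFun
        (fun n ω => (Ψ n ω, A n ω, B n ω, D n ω, L n ω)) P)
    (hid : ∀ n, IdentDistrib (fun ω => (Ψ n ω, A n ω, B n ω, D n ω, L n ω))
        (fun ω => (Ψ 0 ω, A 0 ω, B 0 ω, D 0 ω, L 0 ω)) P P)
    (hintL : Integrable (fun ω => Real.log (L 0 ω)) P)
    (hmeanL : ∫ ω, Real.log (L 0 ω) ∂P < 0)
    (hintBm : Integrable (fun ω => Real.log (max |B 0 ω - D 0 ω| 1)) P)
    (hintBp : Integrable (fun ω => Real.log (max |B 0 ω + D 0 ω| 1)) P) :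
    ∃ R : Ω → ℝ,
      (∀ᵐ ω ∂P, ∀ t : ℝ, Tendsto (fun n => backIter Ψ ω n t) atTop (nhds (R ω))) ∧
      Measure.map (fun p : Ω × Ω => Ψ 0 p.1 (R p.2)) (P.prod P) = Measure.map R P ∧
      (∀ ν : Measure ℝ, IsProbabilityMeasure ν →
        Measure.map (fun p : Ω × ℝ => Ψ 0 p.1 p.2) (P.prod ν) = ν →
        ν = Measure.map R P) := by
  have hcont (n : ℕ) (ω : Ω) : Continuous (Ψ n ω) :=
    (LipschitzWith.of_dist_le' fun t₁ t₂ => by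
      simpa only [Real.dist_eq] using hLip n ω t₁ t₂).continuous
  have hΨ (n : ℕ) : Measurable (Ψ n) := measurable_pi_iff.2 fun t => (hΨmeas n).of_uncurry_right
  have hind : iIndepFun Ψ P := hiid.comp (fun _ => Prod.fst) fun _ => measurable_fst
  have hidΨ (n : ℕ) : P.map (Ψ n) = P.map (Ψ 0) := ((hid n).comp measurable_fst).map_eq
  have hX (n : ℕ) (ω : Ω) : |Ψ n ω 0| ≤
      Real.exp (Real.log (max |B n ω - D n ω| 1) + Real.log (max |B n ω + D n ω| 1)) :=
    (abs_le_max_abs_sub_abs_add (by simpa using (hbound n ω 0).1)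
      (by simpa using (hbound n ω 0).2)).trans (max_le_exp_log_max_one_add _ _)
  have hLavg := strong_law_ae_comp hiid hid (g := fun x => Real.log x.2.2.2.2) (by fun_prop) hintL
  have hXavg := strong_law_ae_comp hiid hid
    (g := fun x => Real.log (max |x.2.2.1 - x.2.2.2.1| 1) +
      Real.log (max |x.2.2.1 + x.2.2.2.1| 1)) (by fun_prop) (hintBm.add hintBp)
  obtain ⟨R, hR, hRlim⟩ := exists_ae_tendsto_backIter hΨmeas hLip hX hmeanL hLavg
    (hXavg.mono fun ω h => tendsto_div_natCast_of_tendsto_avg h)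
  exact ⟨R, hRlim, map_comp_limit_eq_map_limit hΨ hcont hind hidΨ hR (hRlim.mono fun ω h => h 0),
    fun ν _ => eq_map_limit_of_stationary hΨ hcont hind hidΨ hR hRlim ν⟩

/-- a.s. convergence of backward iterations to a limit independent of the
initial value, and existence and uniqueness of the stationary distribution. -/
theorem backward_iterations_converge_unique_stationary {Ω : Type*} [MeasurableSpace Ω]
    (P : Measure Ω) [IsProbabilityMeasure P]
    (Ψ : ℕ → Ω → ℝ → ℝ) (A B D L : ℕ → Ω → ℝ)
    (hΨmeas : ∀ n, Measurable (fun p : Ω × ℝ => Ψ n p.1 p.2))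
    (hbound : ∀ n ω t, A n ω * t + B n ω - D n ω ≤ Ψ n ω t ∧
        Ψ n ω t ≤ A n ω * max t 0 + max (B n ω) 0 + D n ω)
    (hLip : ∀ n ω t₁ t₂, |Ψ n ω t₁ - Ψ n ω t₂| ≤ L n ω * |t₁ - t₂|)
    (hAD : ∀ n, ∀ᵐ ω ∂P, 0 ≤ A n ω ∧ 0 ≤ D n ω)
    (hiid : iIndepFun
        (fun n ω => (Ψ n ω, A n ω, B n ω, D n ω, L n ω)) P)
    (hid : ∀ n, IdentDistrib (fun ω => (Ψ n ω, A n ω, B n ω, D n ω, L n ω))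
        (fun ω => (Ψ 0 ω, A 0 ω, B 0 ω, D 0 ω, L 0 ω)) P P)
    (hintA : Integrable (fun ω => Real.log (A 0 ω)) P)
    (hintL : Integrable (fun ω => Real.log (L 0 ω)) P)
    (hmeanL : ∫ ω, Real.log (L 0 ω) ∂P < 0)
    (hintBm : Integrable (fun ω => Real.log (max |B 0 ω - D 0 ω| 1)) P)
    (hintBp : Integrable (fun ω => Real.log (max |B 0 ω + D 0 ω| 1)) P) :
    ∃ R : Ω → ℝ,
      (∀ᵐ ω ∂P, ∀ t : ℝ, Tendsto (fun n => backIter Ψ ω n t) atTop (nhds (R ω))) ∧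
      Measure.map (fun p : Ω × Ω => Ψ 0 p.1 (R p.2)) (P.prod P) = Measure.map R P ∧
      (∀ ν : Measure ℝ, IsProbabilityMeasure ν →
        Measure.map (fun p : Ω × ℝ => Ψ 0 p.1 p.2) (P.prod ν) = ν →
        ν = Measure.map R P) :=
  backward_iterations_converge_unique_stationary_general P Ψ A B D L hΨmeas hbound hLip hiid hid
    hintL hmeanL hintBm hintBp
end
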